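/- In the monoid presented by ⟨a, b, c, d ∣ ab = bac, bc = cbd, da = ad, bd = db, dc = cd⟩, for every n ≥ 0 the words b·(ac)^n·c and d·a^n·c·b represent the same element. -/
import Mathlib

namespace Stmt11
def a : FreeMonoid (Fin 4) := FreeMonoid.of 0
def b : FreeMonoid (Fin 4) := FreeMonoid.of 1
def c : FreeMonoid (Fin 4) := FreeMonoid.of 2
def d : FreeMonoid (Fin 4) := FreeMonoid.of 3
def rel : FreeMonoid (Fin 4) → FreeMonoid (Fin 4) → Prop :=
  fun x y => (x = a * b ∧ y = b * a * c) ∨ (x = b * c ∧ y = c * b * d) ∨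
    (x = d * a ∧ y = a * d) ∨ (x = b * d ∧ y = d * b) ∨ (x = d * c ∧ y = c * d)

lemma r1 : conGen rel (a*b) (b*a*c) := ConGen.Rel.of _ _ (Or.inl ⟨rfl, rfl⟩)
lemma r2 : conGen rel (b*c) (c*b*d) := ConGen.Rel.of _ _ (Or.inr (Or.inl ⟨rfl, rfl⟩))
lemma r3 : conGen rel (d*a) (a*d) := ConGen.Rel.of _ _ (Or.inr (Or.inr (Or.inl ⟨rfl, rfl⟩)))
lemma r4 : conGen rel (b*d) (d*b) := ConGen.Rel.of _ _ (Or.inr (Or.inr (Or.inr (Or.inl ⟨rfl, rfl⟩))))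
lemma r5 : conGen rel (d*c) (c*d) := ConGen.Rel.of _ _ (Or.inr (Or.inr (Or.inr (Or.inr ⟨rfl, rfl⟩))))

theorem stmt11 (n : ℕ) :
    conGen rel (b * (a * c) ^ n * c) (d * a ^ n * c * b) := by
  induction n with
  | zero =>
    simp only [pow_zero, mul_one]
    have h1 : conGen rel (b*c) (c*(b*d)) := by
      have := r2; simpa [mul_assoc] using this
    have h2 : conGen rel (c*(b*d)) (c*(d*b)) := (conGen rel).mul ((conGen rel).refl c) r4
    have h3 : conGen rel (c*(d*b)) (d*c*b) := by
      have := (conGen rel).mul ((conGen rel).symm r5) ((conGen rel).refl b)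
      simpa [mul_assoc] using this
    exact (conGen rel).trans ((conGen rel).trans h1 h2) h3
  | succ n ih =>
    have h1 : conGen rel (a*b*((a*c)^n*c)) (b*a*c*((a*c)^n*c)) :=
      (conGen rel).mul r1 ((conGen rel).refl _)
    have h2 : conGen rel (a*(b*(a*c)^n*c)) (a*(d*a^n*c*b)) :=
      (conGen rel).mul ((conGen rel).refl a) ih
    have h3 : conGen rel (a*d*(a^n*c*b)) (d*a*(a^n*c*b)) :=
      (conGen rel).mul ((conGen rel).symm r3) ((conGen rel).refl _)
    have h4 : conGen rel (b*(a*c)^(n+1)*c) (a*(b*(a*c)^n*c)) := by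
      have := (conGen rel).symm h1
      simpa [mul_assoc, pow_succ'] using this
    have h5 : conGen rel (a*(d*a^n*c*b)) (d*a^(n+1)*c*b) := by
      simpa [mul_assoc, pow_succ'] using h3
    exact (conGen rel).trans ((conGen rel).trans h4 h2) h5
end Stmt11
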